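/- arXiv:2009.13257 — 5 statements merged into one kernel-verified Lean document; each statement's English description precedes it below -/
import Mathlib

section
/- Let F be a set family on a ground set V and let J be an inclusion-minimal set of edges (pairs of elements of V) such that every set A ∈ F is covered by some edge of J (an edge covers A if exactly one of its endpoints lies in A). Then the graph (V, J) contains no cycle, i.e., J is a forest. -/
/-- An edge (unordered pair) covers a set `A` if exactly one of its endpoints lies in `A`. -/
def edgeCovers {V : Type*} (e : Sym2 V) (A : Set V) : Prop :=
  ∃ u v : V, e = s(u, v) ∧ u ∈ A ∧ v ∉ A

/-- An edge set `J` covers a set family `F` if every member of `F` is covered by some edge. -/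
def coversFamily {V : Type*} (J : Set (Sym2 V)) (F : Set (Set V)) : Prop :=
  ∀ A ∈ F, ∃ e ∈ J, edgeCovers e A

/-
A minimal cover has no cycle: if the edge `vw` lay on a cycle, the rest of the cycle would be a
walk from `v` to `w` avoiding `vw`, and any set separating `v` from `w` is crossed somewhere along
that walk. So `J \ {vw}` would still cover the family.
-/

namespace SimpleGraph

variable {V : Type*} {G : SimpleGraph V}

theorem Walk.exists_mem_edges_edgeCovers {A : Set V} :
    ∀ {u v : V} (p : G.Walk u v), u ∈ A → v ∉ A → ∃ e ∈ p.edges, edgeCovers e A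
  | _, _, .nil, hu, hv => absurd hu hv
  | u, _, .cons (v := w) _ p, hu, hv => by
    by_cases hw : w ∈ A
    · obtain ⟨e, he, hcov⟩ := p.exists_mem_edges_edgeCovers hw hv
      exact ⟨e, List.mem_cons_of_mem _ he, hcov⟩
    · exact ⟨s(u, w), List.mem_cons_self .., u, w, rfl, hu, hw⟩

theorem Reachable.exists_mem_edgeSet_edgeCovers {A : Set V} {u v : V} (h : G.Reachable u v)
    (hu : u ∈ A) (hv : v ∉ A) : ∃ e ∈ G.edgeSet, edgeCovers e A := by
  obtain ⟨p⟩ := h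
  obtain ⟨e, he, hcov⟩ := p.exists_mem_edges_edgeCovers hu hv
  exact ⟨e, p.edges_subset_edgeSet he, hcov⟩

end SimpleGraph

open SimpleGraph

theorem coversFamily.diff_singleton {V : Type*} {J : Set (Sym2 V)} {F : Set (Set V)}
    (hJ : coversFamily J F) {v w : V}
    (hreach : ((fromEdgeSet J).deleteEdges {s(v, w)}).Reachable v w) :
    coversFamily (J \ {s(v, w)}) F := by
  intro A hA
  obtain ⟨e, heJ, hcov⟩ := hJ A hA
  by_cases he : e = s(v, w)
  · obtain ⟨a, b, hab, ha, hb⟩ := hcov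
    have hab_reach : ((fromEdgeSet J).deleteEdges {s(v, w)}).Reachable a b := by
      rcases Sym2.eq_iff.1 (hab.symm.trans he) with ⟨rfl, rfl⟩ | ⟨rfl, rfl⟩
      exacts [hreach, hreach.symm]
    obtain ⟨e', he', hcov'⟩ := hab_reach.exists_mem_edgeSet_edgeCovers ha hb
    rw [edgeSet_deleteEdges, edgeSet_fromEdgeSet] at he'
    exact ⟨e', ⟨he'.1.1, he'.2⟩, hcov'⟩
  · exact ⟨e, ⟨heJ, he⟩, hcov⟩

/-- Any inclusion-minimal cover of a set family is a forest. -/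
theorem minimal_cover_is_forest {V : Type*} (F : Set (Set V)) (J : Set (Sym2 V))
    (hJ : coversFamily J F)
    (hmin : ∀ J' : Set (Sym2 V), J' ⊂ J → ¬ coversFamily J' F) :
    (SimpleGraph.fromEdgeSet J).IsAcyclic := by
  rw [isAcyclic_iff_forall_adj_isBridge]
  intro v w hadj
  rw [isBridge_iff]
  intro hreach
  have hvwJ : s(v, w) ∈ J := (fromEdgeSet_adj J |>.1 hadj).1
  exact hmin _ (Set.sdiff_singleton_ssubset.2 hvwJ) (hJ.diff_singleton hreach)
end

section
/- Let g be a minimal transversal of a symmetric skew-supermodular set function p on S with τ(p) the minimum size of a p-cover. Then there exists a p-cover J of size τ(p) such that for every v ∈ S: d_J(v) ≥ g(v) if g(v) ≥ 1, and d_J(v) = 0 if g(v) = 0. -/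
open Finset

/-- The number of edges of the multiset `J` with exactly one endpoint in `A`. -/
def cutDeg {S : Type*} [DecidableEq S] (J : Multiset (S × S)) (A : Finset S) : ℕ :=
  (J.filter (fun e => ¬((e.1 ∈ A) ↔ (e.2 ∈ A)))).card

/-- `J` covers the set function `p`. -/
def CoversFn {S : Type*} [Fintype S] [DecidableEq S]
    (J : Multiset (S × S)) (p : Finset S → ℤ) : Prop :=
  ∀ A : Finset S, p A ≤ (cutDeg J A : ℤ)

def SkewSupermodular {S : Type*} [Fintype S] [DecidableEq S] (p : Finset S → ℤ) : Prop :=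
  ∀ A B : Finset S,
    p A + p B ≤ p (A ∩ B) + p (A ∪ B) ∨ p A + p B ≤ p (A \ B) + p (B \ A)

def SymmetricFn {S : Type*} [Fintype S] [DecidableEq S] (p : Finset S → ℤ) : Prop :=
  ∀ A : Finset S, p A = p (Finset.univ \ A)

/-- `g` is a `p`-transversal. -/
def IsTransversal {S : Type*} [Fintype S] [DecidableEq S] (p : Finset S → ℤ) (g : S → ℕ) : Prop :=
  ∀ A : Finset S, p A ≤ ∑ v ∈ A, (g v : ℤ)

/-!
Induction on `τ(p)`. By the Benczúr–Frank exchange, the ends of an edge `uv` of an optimal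
cover can be moved into the support of `g`: a minimal tight set `X` separating `u` from `v`
contains a support vertex `u'`, and every tight set separating `u` from `v` contains `X`, so no
set loses coverage when `u` is replaced by `u'`. Removing `uv` then leaves an optimal cover of
the residual function `p^{uv}`, which is again symmetric and skew-supermodular, and lowering `g`
by at most one at `u` and at `v` gives a minimal `p^{uv}`-transversal. Adding `uv` back to the
cover provided by induction restores the degree at `u` and `v`.
-/

section Crossing

variable {S : Type*} [DecidableEq S]

def crossing (e : S × S) (A : Finset S) : ℕ := if e.1 ∈ A ↔ e.2 ∈ A then 0 else 1

lemma crossing_le_one (e : S × S) (A : Finset S) : crossing e A ≤ 1 := by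
  unfold crossing; split <;> omega

lemma crossing_self (a : S) (A : Finset S) : crossing (a, a) A = 0 := by
  simp [crossing]

lemma crossing_swap (a b : S) (A : Finset S) : crossing (b, a) A = crossing (a, b) A := by
  simp only [crossing, Iff.comm]

lemma crossing_eq_one_iff {e : S × S} {A : Finset S} :
    crossing e A = 1 ↔ ¬(e.1 ∈ A ↔ e.2 ∈ A) := by
  unfold crossing; split <;> simp_all

lemma crossing_inter_add_union_le (e : S × S) (A B : Finset S) :
    crossing e (A ∩ B) + crossing e (A ∪ B) ≤ crossing e A + crossing e B := by
  unfold crossing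
  by_cases e.1 ∈ A <;> by_cases e.2 ∈ A <;> by_cases e.1 ∈ B <;> by_cases e.2 ∈ B <;> simp [*]

lemma crossing_sdiff_add_sdiff_le (e : S × S) (A B : Finset S) :
    crossing e (A \ B) + crossing e (B \ A) ≤ crossing e A + crossing e B := by
  unfold crossing
  by_cases e.1 ∈ A <;> by_cases e.2 ∈ A <;> by_cases e.1 ∈ B <;> by_cases e.2 ∈ B <;> simp [*]

/-- The function `p^{uv}` left to cover after the edge `e = uv` is used. -/
def residualFn (p : Finset S → ℤ) (e : S × S) (A : Finset S) : ℤ := p A - crossing e A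

lemma residualFn_swap (p : Finset S → ℤ) (a b : S) :
    residualFn p (b, a) = residualFn p (a, b) := by
  ext A; simp [residualFn, crossing_swap]

lemma cutDeg_eq_sum_map (J : Multiset (S × S)) (A : Finset S) :
    cutDeg J A = (J.map (crossing · A)).sum := by
  induction J using Multiset.induction_on with
  | empty => rfl
  | cons e J ih =>
    rw [Multiset.map_cons, Multiset.sum_cons, ← ih]
    unfold cutDeg crossing
    rw [Multiset.filter_cons]
    split_ifs <;> simp_all [add_comm]

lemma cutDeg_cons (e : S × S) (J : Multiset (S × S)) (A : Finset S) :
    cutDeg (e ::ₘ J) A = crossing e A + cutDeg J A := by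
  simp [cutDeg_eq_sum_map]

lemma cutDeg_inter_add_union_le (J : Multiset (S × S)) (A B : Finset S) :
    cutDeg J (A ∩ B) + cutDeg J (A ∪ B) ≤ cutDeg J A + cutDeg J B := by
  simp only [cutDeg_eq_sum_map, ← Multiset.sum_map_add]
  exact Multiset.sum_map_le_sum_map _ _ fun e _ => crossing_inter_add_union_le e A B

lemma cutDeg_sdiff_add_sdiff_le (J : Multiset (S × S)) (A B : Finset S) :
    cutDeg J (A \ B) + cutDeg J (B \ A) ≤ cutDeg J A + cutDeg J B := by
  simp only [cutDeg_eq_sum_map, ← Multiset.sum_map_add]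
  exact Multiset.sum_map_le_sum_map _ _ fun e _ => crossing_sdiff_add_sdiff_le e A B

lemma cutDeg_sdiff_add_sdiff_add_two_le {u v : S} {J : Multiset (S × S)} (he : (u, v) ∈ J)
    {A B : Finset S} (huA : u ∈ A) (huB : u ∈ B) (hvA : v ∉ A) (hvB : v ∉ B) :
    cutDeg J (A \ B) + cutDeg J (B \ A) + 2 ≤ cutDeg J A + cutDeg J B := by
  obtain ⟨K, rfl⟩ := Multiset.exists_cons_of_mem he
  simp only [cutDeg_cons, crossing, mem_sdiff]
  have := cutDeg_sdiff_add_sdiff_le K A B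
  simp [*]
  omega

end Crossing

section Covers

variable {S : Type*} [Fintype S] [DecidableEq S]

lemma crossing_compl (e : S × S) (A : Finset S) : crossing e (univ \ A) = crossing e A := by
  simp [crossing, not_iff_not]

lemma cutDeg_compl (J : Multiset (S × S)) (A : Finset S) :
    cutDeg J (univ \ A) = cutDeg J A := by
  simp only [cutDeg_eq_sum_map, crossing_compl]

lemma SymmetricFn.residual {p : Finset S → ℤ} (hsym : SymmetricFn p) (e : S × S) :
    SymmetricFn (residualFn p e) := fun A => by
  simp only [residualFn, hsym A, crossing_compl]

lemma SkewSupermodular.residual {p : Finset S → ℤ} (hskew : SkewSupermodular p) (e : S × S) :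
    SkewSupermodular (residualFn p e) := fun A B => by
  have := crossing_inter_add_union_le e A B
  have := crossing_sdiff_add_sdiff_le e A B
  simp only [residualFn]
  rcases hskew A B with h | h
  · left; omega
  · right; omega

lemma coversFn_cons_iff {e : S × S} {J : Multiset (S × S)} {p : Finset S → ℤ} :
    CoversFn (e ::ₘ J) p ↔ CoversFn J (residualFn p e) := by
  simp only [CoversFn, residualFn, cutDeg_cons]
  refine forall_congr' fun A => ?_
  push_cast
  constructor <;> intro h <;> linarith

def IsOptimalCover (J : Multiset (S × S)) (p : Finset S → ℤ) : Prop :=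
  CoversFn J p ∧ ∀ J' : Multiset (S × S), CoversFn J' p → Multiset.card J ≤ Multiset.card J'

lemma IsOptimalCover.of_card_le {J J' : Multiset (S × S)} {p : Finset S → ℤ}
    (hJ : IsOptimalCover J p) (hJ' : CoversFn J' p) (hcard : Multiset.card J' ≤ Multiset.card J) :
    IsOptimalCover J' p :=
  ⟨hJ', fun K hK => hcard.trans (hJ.2 K hK)⟩

lemma IsOptimalCover.residual {e : S × S} {J : Multiset (S × S)} {p : Finset S → ℤ}
    (hJ : IsOptimalCover (e ::ₘ J) p) : IsOptimalCover J (residualFn p e) := by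
  refine ⟨coversFn_cons_iff.1 hJ.1, fun K hK => ?_⟩
  simpa using hJ.2 _ (coversFn_cons_iff.2 hK)

lemma IsOptimalCover.ne_of_cons {a b : S} {J : Multiset (S × S)} {p : Finset S → ℤ}
    (hJ : IsOptimalCover ((a, b) ::ₘ J) p) : a ≠ b := by
  rintro rfl
  have hJp : CoversFn J p := by
    simpa [CoversFn, residualFn, crossing_self] using coversFn_cons_iff.1 hJ.1
  simpa using hJ.2 J hJp

end Covers

section Exchange

variable {S : Type*} [Fintype S] [DecidableEq S] {p : Finset S → ℤ} {J : Multiset (S × S)}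

lemma IsOptimalCover.exists_tight_separating (hsym : SymmetricFn p) (hJ : IsOptimalCover J p)
    {u v : S} (he : (u, v) ∈ J) : ∃ A, u ∈ A ∧ v ∉ A ∧ p A = cutDeg J A := by
  obtain ⟨K, rfl⟩ := Multiset.exists_cons_of_mem he
  have hK : ¬ CoversFn K p := fun hK => by simpa using hJ.2 K hK
  simp only [CoversFn, not_forall, not_le] at hK
  obtain ⟨A, hA⟩ := hK
  have hcov := hJ.1 A
  simp only [cutDeg_cons] at hcov ⊢
  have hcross : crossing (u, v) A = 1 := by have := crossing_le_one (u, v) A; omega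
  have htight : p A = (crossing (u, v) A + cutDeg K A : ℕ) := by omega
  rw [crossing_eq_one_iff] at hcross
  by_cases huA : u ∈ A
  · exact ⟨A, huA, by tauto, htight⟩
  · refine ⟨univ \ A, by simp [huA], by simp; tauto, ?_⟩
    rw [← hsym A, crossing_compl, cutDeg_compl, htight]

/-- The posimodular alternative fails: it would lose the edge `uv` twice. -/
lemma CoversFn.tight_inter (hskew : SkewSupermodular p) (hJ : CoversFn J p) {u v : S}
    (he : (u, v) ∈ J) {X Y : Finset S} (huX : u ∈ X) (huY : u ∈ Y) (hvX : v ∉ X)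
    (hvY : v ∉ Y) (hX : p X = cutDeg J X) (hY : p Y = cutDeg J Y) :
    p (X ∩ Y) = cutDeg J (X ∩ Y) := by
  have hcov := hJ (X ∩ Y)
  have hcov' := hJ (X ∪ Y)
  rcases hskew X Y with h | h
  · have := cutDeg_inter_add_union_le J X Y
    omega
  · have := cutDeg_sdiff_add_sdiff_add_two_le he huX huY hvX hvY
    have := hJ (X \ Y)
    have := hJ (Y \ X)
    omega

lemma IsOptimalCover.exists_least_tight_separating (hsym : SymmetricFn p)
    (hskew : SkewSupermodular p) (hJ : IsOptimalCover J p) {u v : S} (he : (u, v) ∈ J) :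
    ∃ X, u ∈ X ∧ v ∉ X ∧ p X = cutDeg J X ∧
      ∀ Y, u ∈ Y → v ∉ Y → p Y = cutDeg J Y → X ⊆ Y := by
  obtain ⟨X, hX, hXmin⟩ :=
    (univ.filter fun A => u ∈ A ∧ v ∉ A ∧ p A = cutDeg J A).exists_min_image card
      (by simpa [Finset.Nonempty] using hJ.exists_tight_separating hsym he)
  simp only [mem_filter, mem_univ, true_and] at hX hXmin
  obtain ⟨huX, hvX, hX⟩ := hX
  refine ⟨X, huX, hvX, hX, fun Y huY hvY hY => ?_⟩
  have hXY := hXmin (X ∩ Y) ⟨mem_inter.2 ⟨huX, huY⟩, fun h => hvX (mem_inter.1 h).1,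
    hJ.1.tight_inter hskew he huX huY hvX hvY hX hY⟩
  exact inter_eq_left.1 (eq_of_subset_of_card_le inter_subset_left hXY)

/-- Benczúr–Frank exchange: `u'` is a support vertex of the least tight set separating `u` from
`v`, so it lies in every tight set separating `u` from `v`. -/
lemma IsOptimalCover.exists_replace_end (hsym : SymmetricFn p) (hskew : SkewSupermodular p)
    {g : S → ℕ} (hg : IsTransversal p g) (hJ : IsOptimalCover J p) {u v : S}
    (he : (u, v) ∈ J) : ∃ u', 1 ≤ g u' ∧ CoversFn ((u', v) ::ₘ J.erase (u, v)) p := by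
  obtain ⟨X, huX, hvX, hX, hXleast⟩ := hJ.exists_least_tight_separating hsym hskew he
  obtain ⟨u', hu'X, hu'⟩ : ∃ u' ∈ X, 1 ≤ g u' := by
    by_contra! h
    have hpX : 1 ≤ p X := by
      rw [hX, ← Multiset.cons_erase he, cutDeg_cons, crossing_eq_one_iff.2 (by simp [huX, hvX])]
      omega
    have := hg X
    rw [sum_eq_zero fun x hx => by simp [Nat.lt_one_iff.1 (h x hx)]] at this
    omega
  have hsep : ∀ B, p B = cutDeg J B → crossing (u, v) B = 1 → crossing (u', v) B = 1 := by
    intro B hB hcross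
    wlog huB : u ∈ B generalizing B
    · have hvB : v ∈ B := by by_contra; simp_all [crossing]
      simpa [crossing_compl] using this (univ \ B) (by rw [← hsym B, cutDeg_compl, hB])
        (by rwa [crossing_compl]) (by simp; tauto)
    have hvB : v ∉ B := by simp_all [crossing]
    simp [crossing, hXleast B huB hvB hB hu'X, hvB]
  refine ⟨u', hu', fun B => ?_⟩
  have hJB : cutDeg J B = crossing (u, v) B + cutDeg (J.erase (u, v)) B := by
    rw [← cutDeg_cons, Multiset.cons_erase he]
  have := hJ.1 B
  have := crossing_le_one (u, v) B
  have := crossing_le_one (u', v) B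
  rw [cutDeg_cons]
  by_cases htight : p B = cutDeg J B
  · have := hsep B htight
    omega
  · omega

end Exchange

lemma IsOptimalCover.exists_edge_in_support {S : Type*} [Fintype S] [DecidableEq S]
    {p : Finset S → ℤ} {J : Multiset (S × S)} (hsym : SymmetricFn p) (hskew : SkewSupermodular p)
    {g : S → ℕ} (hg : IsTransversal p g) (hJ : IsOptimalCover J p) {e : S × S} (he : e ∈ J) :
    ∃ a b, 1 ≤ g a ∧ 1 ≤ g b ∧ IsOptimalCover ((a, b) ::ₘ J.erase e) p := by
  obtain ⟨u, v⟩ := e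
  have hcard : ∀ c : S × S, Multiset.card (c ::ₘ J.erase (u, v)) ≤ Multiset.card J := fun c => by
    rw [Multiset.card_cons, Multiset.card_erase_add_one he]
  obtain ⟨u', hu', hJ₁⟩ := hJ.exists_replace_end hsym hskew hg he
  have hJ₂ : IsOptimalCover ((v, u') ::ₘ J.erase (u, v)) p := by
    refine hJ.of_card_le ?_ (hcard _)
    rwa [coversFn_cons_iff, residualFn_swap, ← coversFn_cons_iff]
  obtain ⟨v', hv', hJ₃⟩ := hJ₂.exists_replace_end hsym hskew hg (Multiset.mem_cons_self _ _)
  rw [Multiset.erase_cons_head] at hJ₃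
  exact ⟨v', u', hv', hu', hJ.of_card_le hJ₃ (hcard _)⟩

lemma sum_update {S : Type*} [DecidableEq S] (g : S → ℕ) (w : S) (c : ℕ) (A : Finset S) :
    ∑ x ∈ A, (Function.update g w c x : ℤ) =
      ∑ x ∈ A, (g x : ℤ) + if w ∈ A then (c : ℤ) - g w else 0 := by
  have : ∀ x, (Function.update g w c x : ℤ) = g x + if x = w then (c : ℤ) - g w else 0 := by
    intro x
    by_cases hx : x = w
    · subst hx; simp
    · simp [hx]
  simp only [this, sum_add_distrib, sum_ite_eq']

section Transversal

variable {S : Type*} [Fintype S] [DecidableEq S]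

def deficiency (p : Finset S → ℤ) (g : S → ℕ) (A : Finset S) : ℤ := ∑ x ∈ A, (g x : ℤ) - p A

lemma IsTransversal.deficiency_nonneg {p : Finset S → ℤ} {g : S → ℕ} (hg : IsTransversal p g)
    (A : Finset S) : 0 ≤ deficiency p g A :=
  sub_nonneg.2 (hg A)

lemma not_isTransversal_update_iff {p : Finset S → ℤ} {g : S → ℕ} (hg : IsTransversal p g)
    {w : S} (hw : 1 ≤ g w) :
    ¬ IsTransversal p (Function.update g w (g w - 1)) ↔ ∃ A, w ∈ A ∧ deficiency p g A ≤ 0 := by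
  simp only [IsTransversal, sum_update, deficiency, not_forall, not_le]
  constructor
  · rintro ⟨A, hA⟩
    have := hg A
    by_cases hwA : w ∈ A
    · exact ⟨A, hwA, by simp [hwA] at hA; omega⟩
    · simp [hwA] at hA; omega
  · rintro ⟨A, hwA, hA⟩
    exact ⟨A, by simp [hwA]; omega⟩

def IsMinimalTransversal (p : Finset S → ℤ) (g : S → ℕ) : Prop :=
  IsTransversal p g ∧ ∀ w, 1 ≤ g w → ¬ IsTransversal p (Function.update g w (g w - 1))

lemma IsMinimalTransversal.exists_tight {p : Finset S → ℤ} {g : S → ℕ}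
    (hg : IsMinimalTransversal p g) {w : S} (hw : 1 ≤ g w) :
    ∃ A, w ∈ A ∧ deficiency p g A ≤ 0 :=
  (not_isTransversal_update_iff hg.1 hw).1 (hg.2 w hw)

lemma IsMinimalTransversal.of_exists_tight {p : Finset S → ℤ} {g : S → ℕ}
    (hg : IsTransversal p g) (h : ∀ w, 1 ≤ g w → ∃ A, w ∈ A ∧ deficiency p g A ≤ 0) :
    IsMinimalTransversal p g :=
  ⟨hg, fun w hw => (not_isTransversal_update_iff hg hw).2 (h w hw)⟩

lemma IsMinimalTransversal.eq_zero_of_coversFn_zero {p : Finset S → ℤ} {g : S → ℕ}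
    (hg : IsMinimalTransversal p g) (h0 : CoversFn 0 p) (w : S) : g w = 0 := by
  by_contra hw
  obtain ⟨A, hwA, hA⟩ := hg.exists_tight (Nat.one_le_iff_ne_zero.2 hw)
  have := h0 A
  have := single_le_sum (f := fun x => (g x : ℤ)) (fun _ _ => by positivity) hwA
  simp [deficiency, cutDeg] at *
  omega

lemma IsTransversal.deficiency_union_add_inter_le {p : Finset S → ℤ} {g : S → ℕ}
    (hskew : SkewSupermodular p) (hg : IsTransversal p g) {T D : Finset S}
    (h : deficiency p g T + deficiency p g D < 2 * ∑ x ∈ T ∩ D, (g x : ℤ)) :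
    deficiency p g (T ∪ D) + deficiency p g (T ∩ D) ≤ deficiency p g T + deficiency p g D := by
  have hunion := sum_union_inter (s₁ := T) (s₂ := D) (f := fun x => (g x : ℤ))
  simp only [deficiency] at *
  rcases hskew T D with hsup | hpos
  · linarith
  · have hT := sum_inter_add_sum_sdiff T D fun x => (g x : ℤ)
    have hD := sum_inter_add_sum_sdiff D T fun x => (g x : ℤ)
    rw [inter_comm D T] at hD
    linarith [hg (T \ D), hg (D \ T)]

end Transversal

lemma deficiency_residualFn_update {S : Type*} [DecidableEq S] {p : Finset S → ℤ} {g : S → ℕ}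
    {u v : S} (huv : u ≠ v) {a b : ℕ} (ha : a ≤ g u)
    (hb : b ≤ g v) (A : Finset S) :
    deficiency (residualFn p (u, v))
        (Function.update (Function.update g u (g u - a)) v (g v - b)) A =
      deficiency p g A + crossing (u, v) A - (if u ∈ A then (a : ℤ) else 0) -
        (if v ∈ A then (b : ℤ) else 0) := by
  have hgv : Function.update g u (g u - a) v = g v := Function.update_of_ne huv.symm _ _
  simp only [deficiency, residualFn]
  rw [sum_update, sum_update, hgv]
  split_ifs <;> omega

section Residual

variable {S : Type*} [Fintype S] [DecidableEq S] {p : Finset S → ℤ} {g : S → ℕ}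

lemma IsTransversal.residualFn_update (hg : IsTransversal p g) {u v : S} (huv : u ≠ v)
    {a b : ℕ} (ha : a ≤ 1) (hb : b ≤ 1) (hau : a ≤ g u) (hbv : b ≤ g v)
    (hab : ∀ A, u ∈ A → v ∈ A → (a + b : ℤ) ≤ deficiency p g A) :
    IsTransversal (residualFn p (u, v))
      (Function.update (Function.update g u (g u - a)) v (g v - b)) := fun A =>
  sub_nonneg.1 <| by
    have := hg.deficiency_nonneg A
    rw [← deficiency, deficiency_residualFn_update huv hau hbv]
    by_cases huA : u ∈ A <;> by_cases hvA : v ∈ A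
    · have := hab A huA hvA
      simp [crossing, huA, hvA]
      omega
    all_goals simp [crossing, huA, hvA]; omega

/-- A tight set `T` of `g` that stops being tight after the lowering separates `u` from `v`
with `deficiency D ≤ 1`, so uncrossing with `D` makes `T ∪ D` tight instead. -/
lemma IsMinimalTransversal.exists_tight_residualFn_update (hskew : SkewSupermodular p)
    (hg : IsMinimalTransversal p g) {u v : S} (huv : u ≠ v) (hu : 1 ≤ g u) (hv : 1 ≤ g v)
    {a b : ℕ} (ha : a ≤ 1) (hb : b ≤ 1) {D : Finset S} (huD : u ∈ D) (hvD : v ∈ D)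
    (hD : a = 0 ∨ b = 0 → deficiency p g D = a + b) {w : S} (hw : 1 ≤ g w) :
    ∃ A, w ∈ A ∧ deficiency (residualFn p (u, v))
      (Function.update (Function.update g u (g u - a)) v (g v - b)) A ≤ 0 := by
  have hdef := deficiency_residualFn_update (p := p) huv (show a ≤ g u by omega)
    (show b ≤ g v by omega)
  obtain ⟨T, hwT, hT⟩ := hg.exists_tight hw
  have hT0 := hg.1.deficiency_nonneg T
  by_cases hkeep : (crossing (u, v) T : ℤ) ≤
      (if u ∈ T then (a : ℤ) else 0) + (if v ∈ T then (b : ℤ) else 0)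
  · exact ⟨T, hwT, by rw [hdef]; omega⟩
  obtain ⟨s, hs, hgs, hab⟩ : ∃ s ∈ T ∩ D, 1 ≤ g s ∧ (a = 0 ∨ b = 0) := by
    by_cases huT : u ∈ T
    · refine ⟨u, mem_inter.2 ⟨huT, huD⟩, hu, ?_⟩
      by_cases hvT : v ∈ T <;> simp [crossing, huT, hvT] at hkeep <;> omega
    · by_cases hvT : v ∈ T <;> simp [crossing, huT, hvT] at hkeep
      exact ⟨v, mem_inter.2 ⟨hvT, hvD⟩, hv, .inr hkeep⟩
  have hD' := hD hab
  have hTD := hg.1.deficiency_union_add_inter_le hskew (T := T) (D := D) (by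
    have := single_le_sum (f := fun x => (g x : ℤ)) (fun _ _ => by positivity) hs
    omega)
  refine ⟨T ∪ D, mem_union_left _ hwT, ?_⟩
  have := hg.1.deficiency_nonneg (T ∩ D)
  rw [hdef]
  simp [crossing, huD, hvD]
  omega

/-- With `m` the least deficiency of a set `D` containing `u` and `v`, lower `g` at `u` if
`m ≥ 1` and at `v` if `m ≥ 2`. -/
lemma IsMinimalTransversal.exists_residual (hskew : SkewSupermodular p)
    (hg : IsMinimalTransversal p g) {u v : S} (huv : u ≠ v) (hu : 1 ≤ g u) (hv : 1 ≤ g v) :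
    ∃ g' : S → ℕ, IsMinimalTransversal (residualFn p (u, v)) g' ∧ g u ≤ g' u + 1 ∧
      g v ≤ g' v + 1 ∧ ∀ w, w ≠ u → w ≠ v → g' w = g w := by
  obtain ⟨D, hD, hDmin⟩ := (univ.filter fun A : Finset S => u ∈ A ∧ v ∈ A).exists_min_image
    (deficiency p g) ⟨univ, by simp⟩
  simp only [mem_filter, mem_univ, true_and] at hD hDmin
  have hm := hg.1.deficiency_nonneg D
  obtain ⟨a, b, ha, hb, habm, hab0⟩ : ∃ a b : ℕ, a ≤ 1 ∧ b ≤ 1 ∧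
      (a + b : ℤ) ≤ deficiency p g D ∧ (a = 0 ∨ b = 0 → deficiency p g D = a + b) := by
    rcases (show deficiency p g D = 0 ∨ deficiency p g D = 1 ∨ 2 ≤ deficiency p g D by omega)
      with h | h | h
    exacts [⟨0, 0, by omega⟩, ⟨1, 0, by omega⟩, ⟨1, 1, by omega⟩]
  have htrans := hg.1.residualFn_update huv ha hb (by omega) (by omega)
    fun A huA hvA => habm.trans (hDmin A ⟨huA, hvA⟩)
  set g' := Function.update (Function.update g u (g u - a)) v (g v - b)
  have hg'u : g' u = g u - a := by simp [g', huv]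
  have hg'v : g' v = g v - b := by simp [g']
  have hg'w : ∀ w, w ≠ u → w ≠ v → g' w = g w := fun w hwu hwv => by simp [g', hwu, hwv]
  refine ⟨g', .of_exists_tight htrans fun w hw => ?_, by omega, by omega, hg'w⟩
  refine hg.exists_tight_residualFn_update hskew huv hu hv ha hb hD.1 hD.2 hab0 ?_
  by_cases hwu : w = u
  · exact hwu ▸ hu
  by_cases hwv : w = v
  · exact hwv ▸ hv
  rwa [← hg'w w hwu hwv]

end Residual

section Main

variable {S : Type*} [DecidableEq S]

def RespectsTransversal (J : Multiset (S × S)) (g : S → ℕ) : Prop :=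
  ∀ v, (1 ≤ g v → g v ≤ cutDeg J {v}) ∧ (g v = 0 → cutDeg J {v} = 0)

lemma RespectsTransversal.cons {K : Multiset (S × S)} {g g' : S → ℕ}
    (hK : RespectsTransversal K g') {u v : S} (huv : u ≠ v) (hu : 1 ≤ g u) (hv : 1 ≤ g v)
    (hgu : g u ≤ g' u + 1) (hgv : g v ≤ g' v + 1) (hg' : ∀ w, w ≠ u → w ≠ v → g' w = g w) :
    RespectsTransversal ((u, v) ::ₘ K) g := by
  intro w
  have hKw : g' w ≤ cutDeg K {w} := by
    by_cases h : g' w = 0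
    · omega
    · exact (hK w).1 (by omega)
  rw [cutDeg_cons]
  by_cases hwu : w = u
  · subst hwu; simp [crossing, huv.symm]; omega
  by_cases hwv : w = v
  · subst hwv; simp [crossing, huv]; omega
  simp only [crossing, mem_singleton, Ne.symm hwu, Ne.symm hwv, iff_self, if_true, zero_add,
    ← hg' w hwu hwv]
  exact hK w

variable [Fintype S] {p : Finset S → ℤ}

theorem IsOptimalCover.exists_respectsTransversal (hsym : SymmetricFn p)
    (hskew : SkewSupermodular p) {g : S → ℕ} (hg : IsMinimalTransversal p g)
    {J₀ : Multiset (S × S)} (hJ₀ : IsOptimalCover J₀ p) :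
    ∃ J, CoversFn J p ∧ Multiset.card J = Multiset.card J₀ ∧ RespectsTransversal J g := by
  induction hn : Multiset.card J₀ generalizing p g J₀ with
  | zero =>
    rw [Multiset.card_eq_zero] at hn
    subst hn
    refine ⟨0, hJ₀.1, rfl, fun w => ?_⟩
    simp [hg.eq_zero_of_coversFn_zero hJ₀.1 w, cutDeg]
  | succ n ih =>
    obtain ⟨e, he⟩ := Multiset.card_pos_iff_exists_mem.1 (by rw [hn]; omega)
    obtain ⟨a, b, ha, hb, hJ⟩ := hJ₀.exists_edge_in_support hsym hskew hg.1 he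
    have hab := hJ.ne_of_cons
    obtain ⟨g', hg', hga, hgb, hg'eq⟩ := hg.exists_residual hskew hab ha hb
    obtain ⟨K, hK, hKcard, hKg'⟩ := ih (hsym.residual (a, b)) (hskew.residual (a, b)) hg'
      hJ.residual (by rw [← Multiset.card_erase_add_one he] at hn; omega)
    exact ⟨(a, b) ::ₘ K, coversFn_cons_iff.2 hK, by rw [Multiset.card_cons, hKcard],
      hKg'.cons hab ha hb hga hgb hg'eq⟩

end Main

/-- Lemma: for a minimal transversal `g` of a symmetric skew-supermodular function `p`,
there is an optimal `p`-cover `J` with `d_J(v) ≥ g(v)` on the support of `g` and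
`d_J(v) = 0` elsewhere. -/
theorem exists_opt_cover_respecting_transversal {S : Type*} [Fintype S] [DecidableEq S]
    (p : Finset S → ℤ) (hsym : SymmetricFn p) (hskew : SkewSupermodular p)
    (g : S → ℕ) (hg : IsTransversal p g)
    (hmin : ∀ v : S, 1 ≤ g v → ¬ IsTransversal p (Function.update g v (g v - 1)))
    (J₀ : Multiset (S × S)) (hJ₀ : CoversFn J₀ p)
    (hopt : ∀ J' : Multiset (S × S), CoversFn J' p → Multiset.card J₀ ≤ Multiset.card J') :
    ∃ J : Multiset (S × S), CoversFn J p ∧ Multiset.card J = Multiset.card J₀ ∧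
      ∀ v : S, (1 ≤ g v → (g v : ℤ) ≤ (cutDeg J {v} : ℤ)) ∧ (g v = 0 → cutDeg J {v} = 0) := by
  obtain ⟨J, hJ, hcard, hresp⟩ :=
    IsOptimalCover.exists_respectsTransversal hsym hskew ⟨hg, hmin⟩ ⟨hJ₀, hopt⟩
  exact ⟨J, hJ, hcard, fun v => ⟨fun h => by exact_mod_cast (hresp v).1 h, (hresp v).2⟩⟩
end

section
/- Let p₁, ..., p_m be integers each in the range [0, k] with Σ p_j ≥ k, where k ≥ 2. Then {1,...,m} can be partitioned into nonempty parts such that for each part I, the value (Σ_{j∈I} p_j) + 1 lies in the interval [k, 3k], except possibly that all indices lie in a single part whose sum plus 1 is at most 3k and at least k. -/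
/-!
If a set has sum above `2k` and every element is at most `k`, discarding elements one at a time
reaches a subset with sum in `[k, 2k]`. While the total is at least `3k`, split off such a subset:
the remainder still has sum at least `k`, so the recursion continues until the total is below `3k`,
and that last part is kept whole.
-/

open Finset

section

variable {ι α : Type*} [DecidableEq ι] [AddCommGroup α] [LinearOrder α] [IsOrderedAddMonoid α]
  {f : ι → α} {k : α}

theorem exists_subset_sum_mem_Icc (hk : 0 ≤ k) :
    ∀ s : Finset ι, (∀ i ∈ s, f i ≤ k) → k ≤ ∑ i ∈ s, f i →
      ∃ t ⊆ s, ∑ i ∈ t, f i ∈ Set.Icc k (2 • k) := by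
  intro s
  induction s using Finset.strongInduction with
  | _ s ih =>
    intro hf hs
    by_cases hle : ∑ i ∈ s, f i ≤ 2 • k
    · exact ⟨s, Subset.rfl, hs, hle⟩
    obtain ⟨a, ha⟩ : s.Nonempty := by
      contrapose! hle
      simp only [hle, sum_empty, two_nsmul]
      exact add_nonneg hk hk
    have hrest : k ≤ ∑ i ∈ s.erase a, f i := by
      rw [← add_le_add_iff_right (f a), sum_erase_add s f ha]
      calc k + f a ≤ 2 • k := by rw [two_nsmul]; gcongr; exact hf a ha
        _ ≤ _ := (not_le.mp hle).le
    obtain ⟨t, hts, ht⟩ :=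
      ih _ (erase_ssubset ha) (fun i hi => hf i (mem_of_mem_erase hi)) hrest
    exact ⟨t, hts.trans (erase_subset a s), ht⟩

theorem exists_finpartition_sum_mem_Ico (hk : 0 < k) :
    ∀ s : Finset ι, (∀ i ∈ s, f i ≤ k) → k ≤ ∑ i ∈ s, f i →
      ∃ P : Finpartition s, ∀ I ∈ P.parts, ∑ i ∈ I, f i ∈ Set.Ico k (3 • k) := by
  intro s
  induction s using Finset.strongInduction with
  | _ s ih =>
    intro hf hs
    have nonempty_of_le_sum {t : Finset ι} (ht : k ≤ ∑ i ∈ t, f i) : t ≠ ∅ := by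
      rintro rfl
      exact (lt_of_lt_of_le hk ht).ne' sum_empty
    by_cases hlt : ∑ i ∈ s, f i < 3 • k
    · refine ⟨Finpartition.indiscrete (nonempty_of_le_sum hs), fun I hI => ?_⟩
      rw [Finpartition.indiscrete_parts, mem_singleton] at hI
      exact hI ▸ ⟨hs, hlt⟩
    obtain ⟨t, hts, htk, ht2k⟩ := exists_subset_sum_mem_Icc hk.le s hf hs
    have hrest : k ≤ ∑ i ∈ s \ t, f i := by
      rw [sum_sdiff_eq_sub hts, le_sub_iff_add_le]
      calc k + ∑ i ∈ t, f i ≤ 3 • k := by rw [succ_nsmul, add_comm]; gcongr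
        _ ≤ _ := not_lt.mp hlt
    have ht : t ≠ ∅ := nonempty_of_le_sum htk
    obtain ⟨P, hP⟩ := ih _ (sdiff_ssubset hts (nonempty_iff_ne_empty.mpr ht))
      (fun i hi => hf i (mem_sdiff.mp hi).1) hrest
    refine ⟨P.extend ht sdiff_disjoint (sdiff_union_of_subset hts), fun I hI => ?_⟩
    rw [Finpartition.extend_parts, mem_insert] at hI
    rcases hI with rfl | hI
    · exact ⟨htk, ht2k.trans_lt (nsmul_lt_nsmul_left hk (by norm_num))⟩
    · exact hP I hI

end

theorem binpacking_partition_general (m : ℕ) (k : ℤ) (hk : 2 ≤ k) (p : Fin m → ℤ)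
    (hub : ∀ j, p j ≤ k) (hsum : k ≤ ∑ j, p j) :
    ∃ P : Finpartition (Finset.univ : Finset (Fin m)),
      ∀ I ∈ P.parts, k - 1 ≤ ∑ j ∈ I, p j ∧ ∑ j ∈ I, p j ≤ 3 * k - 1 := by
  obtain ⟨P, hP⟩ := exists_finpartition_sum_mem_Ico (by omega) univ (fun j _ => hub j) hsum
  refine ⟨P, fun I hI => ?_⟩
  obtain ⟨hlo, hhi⟩ := hP I hI
  rw [nsmul_eq_mul, Nat.cast_ofNat] at hhi
  omega

/-- Bin-packing claim: integers `p j ∈ [0, k]` with total sum at least `k` (`k ≥ 2`) can be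
partitioned into parts each having total sum in `[k − 1, 3k − 1]` (so each part's sum plus one
lies in `[k, 3k]`). -/
theorem binpacking_partition (m : ℕ) (k : ℤ) (hk : 2 ≤ k) (p : Fin m → ℤ)
    (hnn : ∀ j, 0 ≤ p j) (hub : ∀ j, p j ≤ k) (hsum : k ≤ ∑ j, p j) :
    ∃ P : Finpartition (Finset.univ : Finset (Fin m)),
      ∀ I ∈ P.parts, k - 1 ≤ ∑ j ∈ I, p j ∧ ∑ j ∈ I, p j ≤ 3 * k - 1 :=
  binpacking_partition_general m k hk p hub hsum
end

section
/- Let H = (U, E_H) be a graph with an independent set R ⊆ U of terminals, and suppose every non-terminal s ∈ U \ R has exactly 2 terminal neighbors (denote this pair R(s)). If for every pair of adjacent non-terminals a, b the sets R(a) and R(b) intersect, then every set S of non-terminals such that H[S ∪ R'] is connected for the set R' of terminals dominated by S with R' = R satisfies |S| ≥ |R| − 1. -/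
/-!
Join two terminals whenever some vertex of `S` is adjacent to both. Walking through the
connected graph `H[S]`, consecutive vertices share a terminal, so this graph on `R` is
connected and has at least `|R| - 1` edges. A vertex of `S` sees only two terminals, so it
accounts for at most one edge, and choosing a witness per edge is injective: `|S| ≥ |R| - 1`.
-/

open Finset

lemma Sym2.eq_of_mem_of_encard_le_two {α : Type*} {t : Set α} (ht : t.encard ≤ 2)
    {a b c d : α} (ha : a ∈ t) (hb : b ∈ t) (hc : c ∈ t) (hd : d ∈ t) (hab : a ≠ b)
    (hcd : c ≠ d) : s(a, b) = s(c, d) := by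
  have hsub : ({a, b} : Set α) ⊆ t := Set.insert_subset ha (Set.singleton_subset_iff.mpr hb)
  have hpair : ({a, b} : Set α) = t :=
    (Set.toFinite _).eq_of_subset_of_encard_le hsub (by rwa [Set.encard_pair hab])
  rw [← hpair] at hc hd
  rcases hc with rfl | rfl <;> rcases hd with rfl | rfl <;> simp_all [Sym2.eq_swap]

namespace SimpleGraph

variable {V : Type*}

def terminalGraph (H : SimpleGraph V) (S R : Set V) : SimpleGraph R where
  Adj r r' := r ≠ r' ∧ ∃ s ∈ S, H.Adj s r ∧ H.Adj s r'
  symm := ⟨fun _ _ ⟨hne, s, hs, hr, hr'⟩ => ⟨hne.symm, s, hs, hr', hr⟩⟩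
  loopless := ⟨fun _ h => h.1 rfl⟩

variable {H : SimpleGraph V} {S R : Set V}

@[simp]
lemma terminalGraph_adj {r r' : R} :
    (H.terminalGraph S R).Adj r r' ↔ r ≠ r' ∧ ∃ s ∈ S, H.Adj s r ∧ H.Adj s r' :=
  Iff.rfl

lemma terminalGraph_reachable_of_adj {s : V} (hs : s ∈ S) {r r' : R} (hr : H.Adj s r)
    (hr' : H.Adj s r') : (H.terminalGraph S R).Reachable r r' := by
  by_cases h : r = r'
  · exact h ▸ Reachable.refl r
  · exact Adj.reachable (terminalGraph_adj.mpr ⟨h, s, hs, hr, hr'⟩)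

lemma terminalGraph_reachable_of_walk
    (hmeet : ∀ a ∈ S, ∀ b ∈ S, H.Adj a b → ∃ r ∈ R, H.Adj a r ∧ H.Adj b r)
    {a b : S} (w : (H.induce S).Walk a b) {r r' : R} (hr : H.Adj a r) (hr' : H.Adj b r') :
    (H.terminalGraph S R).Reachable r r' := by
  induction w generalizing r with
  | nil => exact terminalGraph_reachable_of_adj (Subtype.prop _) hr hr'
  | @cons a c _ hac _ ih =>
    obtain ⟨t, ht, hat, hct⟩ := hmeet a a.2 c c.2 (by simpa using hac)
    exact (terminalGraph_reachable_of_adj (r' := ⟨t, ht⟩) a.2 hr hat).trans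
      (ih (r := ⟨t, ht⟩) hct hr')

lemma terminalGraph_connected [Nonempty R] (hS : (H.induce S).Connected)
    (hdom : ∀ r ∈ R, ∃ s ∈ S, H.Adj s r)
    (hmeet : ∀ a ∈ S, ∀ b ∈ S, H.Adj a b → ∃ r ∈ R, H.Adj a r ∧ H.Adj b r) :
    (H.terminalGraph S R).Connected := by
  refine ⟨fun r r' => ?_⟩
  obtain ⟨s, hs, hsr⟩ := hdom r r.2
  obtain ⟨s', hs', hsr'⟩ := hdom r' r'.2
  obtain ⟨w⟩ := hS.preconnected ⟨s, hs⟩ ⟨s', hs'⟩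
  exact terminalGraph_reachable_of_walk hmeet w hsr hsr'

lemma exists_adj_of_mem_edgeSet_terminalGraph {e : Sym2 R}
    (he : e ∈ (H.terminalGraph S R).edgeSet) : ∃ s : S, ∀ r ∈ e, H.Adj s r := by
  induction e using Sym2.ind with
  | _ r r' =>
    obtain ⟨-, s, hs, hr, hr'⟩ := terminalGraph_adj.mp he
    exact ⟨⟨s, hs⟩, by simp [hr, hr']⟩

lemma terminalGraph_edge_eq_of_forall_adj {s : V} (hs : (H.neighborSet s ∩ R).encard ≤ 2)
    {e e' : Sym2 R} (he : e ∈ (H.terminalGraph S R).edgeSet)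
    (he' : e' ∈ (H.terminalGraph S R).edgeSet) (hse : ∀ r ∈ e, H.Adj s r)
    (hse' : ∀ r ∈ e', H.Adj s r) : e = e' := by
  induction e using Sym2.ind with | _ a b =>
  induction e' using Sym2.ind with | _ c d =>
  apply Sym2.map.injective Subtype.val_injective
  simp only [Sym2.map_mk]
  exact Sym2.eq_of_mem_of_encard_le_two hs ⟨hse a (by simp), a.2⟩ ⟨hse b (by simp), b.2⟩
    ⟨hse' c (by simp), c.2⟩ ⟨hse' d (by simp), d.2⟩
    (Subtype.val_injective.ne (terminalGraph_adj.mp he).1)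
    (Subtype.val_injective.ne (terminalGraph_adj.mp he').1)

lemma card_edgeSet_terminalGraph_le (hS : S.Finite)
    (hdeg : ∀ s ∈ S, (H.neighborSet s ∩ R).encard ≤ 2) :
    Nat.card (H.terminalGraph S R).edgeSet ≤ Nat.card S := by
  have := hS.to_subtype
  choose f hf using fun e : (H.terminalGraph S R).edgeSet =>
    exists_adj_of_mem_edgeSet_terminalGraph e.2
  refine Nat.card_le_card_of_injective f fun e e' hee' => Subtype.ext ?_
  exact terminalGraph_edge_eq_of_forall_adj (hdeg _ (f e).2) e.2 e'.2 (hf e) (hee' ▸ hf e')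

end SimpleGraph

open SimpleGraph in
theorem cds_lower_bound_general {U : Type*} [Fintype U] [DecidableEq U]
    (H : SimpleGraph U) [DecidableRel H.Adj] (R : Finset U)
    (hdeg : ∀ s : U, s ∉ R → (H.neighborFinset s ∩ R).card = 2)
    (hmeet : ∀ a b : U, a ∉ R → b ∉ R → H.Adj a b →
      ((H.neighborFinset a ∩ R) ∩ (H.neighborFinset b ∩ R)).Nonempty)
    (S : Finset U) (hSR : ∀ s ∈ S, s ∉ R)
    (hconn : (H.induce (↑S : Set U)).Connected)
    (hdom : ∀ r ∈ R, ∃ s ∈ S, H.Adj s r) :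
    R.card ≤ S.card + 1 := by
  rcases R.eq_empty_or_nonempty with rfl | hR
  · simp
  have : Nonempty (↑R : Set U) := hR.to_subtype
  have hmeet' : ∀ a ∈ (S : Set U), ∀ b ∈ (S : Set U), H.Adj a b →
      ∃ r ∈ (R : Set U), H.Adj a r ∧ H.Adj b r := by
    intro a ha b hb hab
    obtain ⟨r, hr⟩ := hmeet a b (hSR a ha) (hSR b hb) hab
    simp only [mem_inter, mem_neighborFinset] at hr
    exact ⟨r, hr.1.2, hr.1.1, hr.2.1⟩
  have hdeg' : ∀ s ∈ (S : Set U), (H.neighborSet s ∩ R).encard ≤ 2 := by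
    intro s hs
    rw [← coe_neighborFinset, ← coe_inter, Set.encard_coe_eq_coe_finsetCard, hdeg s (hSR s hs)]
    rfl
  have hvert := (terminalGraph_connected hconn hdom hmeet').card_vert_le_card_edgeSet_add_one
  have hedge := card_edgeSet_terminalGraph_le S.finite_toSet hdeg'
  simp only [Nat.card_coe_set_eq, Set.ncard_coe_finset] at hvert hedge
  omega

/-- Lemma 1 of the paper: in an SS-CDS instance where every non-terminal has exactly two
terminal neighbors and any two adjacent non-terminals share a terminal neighbor, every
feasible connected dominating solution `S` has `|S| ≥ |R| − 1`. -/
theorem cds_lower_bound {U : Type*} [Fintype U] [DecidableEq U]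
    (H : SimpleGraph U) [DecidableRel H.Adj] (R : Finset U)
    (hind : ∀ u ∈ R, ∀ v ∈ R, ¬ H.Adj u v)
    (hdeg : ∀ s : U, s ∉ R → (H.neighborFinset s ∩ R).card = 2)
    (hmeet : ∀ a b : U, a ∉ R → b ∉ R → H.Adj a b →
      ((H.neighborFinset a ∩ R) ∩ (H.neighborFinset b ∩ R)).Nonempty)
    (S : Finset U) (hSR : ∀ s ∈ S, s ∉ R)
    (hconn : (H.induce (↑S : Set U)).Connected)
    (hdom : ∀ r ∈ R, ∃ s ∈ S, H.Adj s r) :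
    R.card ≤ S.card + 1 :=
  cds_lower_bound_general H R hdeg hmeet S hSR hconn hdom
end

section
/- Let p be a nonnegative symmetric skew-supermodular set function on S with p(∅) = 0, and let g be a minimal p-transversal. Then Σ_{v∈S} g(v) = max{Σ_{A∈F} p(A) : F a subpartition of S}. -/
open Finset

/-!
A set `A` is tight when `p A = ∑ v ∈ A, g v`. Minimality of `g` puts every point of the support
of `g` into a tight set. Skew-supermodularity uncrosses two meeting tight sets: either their union
is tight, or both differences are tight and `g` vanishes on the intersection. Uncrossing a
family of tight sets covering the support decreases its total size, so it terminates in a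
subpartition of tight sets covering the support, whose `p`-value is `∑ v, g v`. Conversely, a
transversal bounds the `p`-value of every subpartition.
-/

def IsTight {S : Type*} (p : Finset S → ℤ) (g : S → ℕ) (A : Finset S) : Prop :=
  p A = ∑ v ∈ A, (g v : ℤ)

section
variable {S : Type*} [Fintype S] [DecidableEq S] {p : Finset S → ℤ} {g : S → ℕ}

theorem IsTransversal.sum_le_of_pairwiseDisjoint (hg : IsTransversal p g)
    {F : Finset (Finset S)} (hF : (F : Set (Finset S)).PairwiseDisjoint id) :
    ∑ A ∈ F, p A ≤ ∑ v, (g v : ℤ) :=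
  calc ∑ A ∈ F, p A ≤ ∑ A ∈ F, ∑ v ∈ A, (g v : ℤ) := sum_le_sum fun A _ => hg A
    _ = ∑ v ∈ F.biUnion id, (g v : ℤ) := (sum_biUnion hF).symm
    _ ≤ ∑ v, (g v : ℤ) := sum_le_univ_sum_of_nonneg fun v => Int.natCast_nonneg (g v)

theorem IsTransversal.exists_isTight_mem (hg : IsTransversal p g) {v : S} (hv : 0 < g v)
    (hnot : ¬ IsTransversal p (Function.update g v (g v - 1))) :
    ∃ A, v ∈ A ∧ IsTight p g A := by
  obtain ⟨A, hA⟩ : ∃ A, ∑ u ∈ A, ((Function.update g v (g v - 1) u : ℕ) : ℤ) < p A := by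
    simpa [IsTransversal] using hnot
  have hdrop : ∑ u ∈ A, ((Function.update g v (g v - 1) u : ℕ) : ℤ)
      = ∑ u ∈ A, (g u : ℤ) - if v ∈ A then 1 else 0 := by
    rw [← sum_ite_eq' A v (fun _ => (1 : ℤ)), ← sum_sub_distrib]
    refine sum_congr rfl fun u _ => ?_
    rcases eq_or_ne u v with rfl | huv
    · simp only [Function.update_self, if_true]; omega
    · simp [huv]
  have := hg A
  by_cases hvA : v ∈ A
  · exact ⟨A, hvA, by simp only [hvA, if_true] at hdrop; unfold IsTight; omega⟩
  · simp only [hvA, if_false] at hdrop; omega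

theorem IsTight.uncross (hskew : SkewSupermodular p) (hg : IsTransversal p g)
    {A B : Finset S} (hA : IsTight p g A) (hB : IsTight p g B) :
    IsTight p g (A ∪ B) ∨
      IsTight p g (A \ B) ∧ IsTight p g (B \ A) ∧ ∀ v ∈ A ∩ B, g v = 0 := by
  unfold IsTight at hA hB ⊢
  have hAB := hg (A ∩ B)
  rcases hskew A B with hmod | hmod
  · have := hg (A ∪ B)
    have := sum_union_inter (s₁ := A) (s₂ := B) (f := fun v => (g v : ℤ))
    left; linarith
  · have hdA := hg (A \ B)
    have hdB := hg (B \ A)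
    have := sum_inter_add_sum_sdiff A B (fun v => (g v : ℤ))
    have := sum_inter_add_sum_sdiff B A (fun v => (g v : ℤ))
    rw [inter_comm B A] at this
    have hnonneg : ∀ v ∈ A ∩ B, (0 : ℤ) ≤ g v := fun v _ => Int.natCast_nonneg (g v)
    have hzero : ∑ v ∈ A ∩ B, (g v : ℤ) = 0 := le_antisymm (by linarith) (sum_nonneg hnonneg)
    refine Or.inr ⟨by linarith, by linarith, fun v hv => ?_⟩
    exact_mod_cast (sum_eq_zero_iff_of_nonneg hnonneg).1 hzero v hv

theorem IsTight.exists_uncrossing (hskew : SkewSupermodular p) (hg : IsTransversal p g)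
    {A B : Finset S} (hA : IsTight p g A) (hB : IsTight p g B) (hmeet : (A ∩ B).Nonempty) :
    ∃ R : Finset (Finset S), (∀ C ∈ R, IsTight p g C) ∧ ∑ C ∈ R, #C < #A + #B ∧
      ∀ v ∈ A ∪ B, 0 < g v → ∃ C ∈ R, v ∈ C := by
  have hmeet := card_pos.2 hmeet
  rcases hA.uncross hskew hg hB with hU | ⟨hAB, hBA, hzero⟩
  · refine ⟨{A ∪ B}, by simpa using hU, ?_, fun v hv _ => ⟨A ∪ B, mem_singleton_self _, hv⟩⟩
    have := card_union_add_card_inter A B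
    rw [sum_singleton]; omega
  · refine ⟨{A \ B, B \ A}, by simp [hAB, hBA], ?_, fun v hv hgv => ?_⟩
    · have hsum := sum_union_inter (s₁ := {A \ B}) (s₂ := {B \ A}) (f := card)
      rw [← insert_eq, sum_singleton, sum_singleton] at hsum
      have := card_sdiff_add_card_inter A B
      have := card_sdiff_add_card_inter B A
      rw [inter_comm B A] at this
      omega
    · have : v ∉ A ∩ B := fun hv' => (hzero v hv').not_gt hgv
      by_cases hvA : v ∈ A
      · exact ⟨A \ B, by simp, by simp_all⟩
      · exact ⟨B \ A, by simp, by simp_all⟩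

theorem sum_eq_sum_of_isTight_cover {F : Finset (Finset S)}
    (hF : (F : Set (Finset S)).PairwiseDisjoint id) (ht : ∀ A ∈ F, IsTight p g A)
    (hcov : ∀ v, 0 < g v → v ∈ F.biUnion id) :
    ∑ A ∈ F, p A = ∑ v, (g v : ℤ) := by
  refine (sum_congr rfl ht).trans <| (sum_biUnion hF).symm.trans <|
    sum_subset (subset_univ _) fun v _ hv => ?_
  simpa using mt (hcov v) hv

theorem exists_isTight_family_sum_card_lt (hskew : SkewSupermodular p) (hg : IsTransversal p g)
    {F : Finset (Finset S)} (hF : ∀ C ∈ F, IsTight p g C)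
    (hcross : ¬ (F : Set (Finset S)).PairwiseDisjoint id) :
    ∃ G : Finset (Finset S), (∀ C ∈ G, IsTight p g C) ∧ ∑ C ∈ G, #C < ∑ C ∈ F, #C ∧
      ∀ v ∈ F.biUnion id, 0 < g v → v ∈ G.biUnion id := by
  obtain ⟨A, hA, B, hB, hAB, hmeet⟩ : ∃ A ∈ F, ∃ B ∈ F, A ≠ B ∧ (A ∩ B).Nonempty := by
    simpa [Set.PairwiseDisjoint, Set.Pairwise, not_disjoint_iff_nonempty_inter] using hcross
  obtain ⟨R, hRt, hRcard, hRcov⟩ := (hF A hA).exists_uncrossing hskew hg (hF B hB) hmeet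
  have hpair : {A, B} ⊆ F := insert_subset hA (singleton_subset_iff.2 hB)
  refine ⟨R ∪ F \ {A, B}, ?_, ?_, ?_⟩
  · intro C hC
    rcases mem_union.1 hC with hC | hC
    · exact hRt C hC
    · exact hF C (mem_sdiff.1 hC).1
  · have := sum_union_inter (s₁ := R) (s₂ := F \ {A, B}) (f := card)
    have := sum_sdiff hpair (f := card)
    rw [sum_pair hAB] at this
    omega
  · intro v hv hgv
    obtain ⟨C, hC, hvC⟩ := mem_biUnion.1 hv
    by_cases hCAB : C ∈ ({A, B} : Finset (Finset S))
    · obtain ⟨C', hC', hvC'⟩ := hRcov v (by aesop) hgv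
      exact mem_biUnion.2 ⟨C', mem_union_left _ hC', hvC'⟩
    · exact mem_biUnion.2 ⟨C, mem_union_right _ (mem_sdiff.2 ⟨hC, hCAB⟩), hvC⟩

theorem exists_pairwiseDisjoint_isTight_cover (hskew : SkewSupermodular p)
    (hg : IsTransversal p g) (F : Finset (Finset S)) (hF : ∀ C ∈ F, IsTight p g C) :
    ∃ G : Finset (Finset S), (G : Set (Finset S)).PairwiseDisjoint id ∧
      (∀ C ∈ G, IsTight p g C) ∧ ∀ v ∈ F.biUnion id, 0 < g v → v ∈ G.biUnion id := by
  induction hn : ∑ C ∈ F, #C using Nat.strong_induction_on generalizing F with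
  | _ n ih =>
  by_cases hdisj : (F : Set (Finset S)).PairwiseDisjoint id
  · exact ⟨F, hdisj, hF, fun v hv _ => hv⟩
  obtain ⟨G, hGt, hGcard, hGcov⟩ := exists_isTight_family_sum_card_lt hskew hg hF hdisj
  obtain ⟨H, hHd, hHt, hHcov⟩ := ih _ (hn ▸ hGcard) G hGt rfl
  exact ⟨H, hHd, hHt, fun v hv hgv => hHcov v (hGcov v hv hgv) hgv⟩

end

theorem minimal_transversal_value_general {S : Type*} [Fintype S] [DecidableEq S]
    (p : Finset S → ℤ) (hskew : SkewSupermodular p)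
    (g : S → ℕ) (hg : IsTransversal p g)
    (hmin : ∀ v : S, 1 ≤ g v → ¬ IsTransversal p (Function.update g v (g v - 1))) :
    IsGreatest
      {x : ℤ | ∃ F : Finset (Finset S), (∀ A ∈ F, A.Nonempty) ∧
        ((F : Set (Finset S)).Pairwise fun A B => Disjoint A B) ∧ x = ∑ A ∈ F, p A}
      (∑ v : S, (g v : ℤ)) := by
  refine ⟨?_, fun x ⟨F, _, hF, hx⟩ => hx ▸ hg.sum_le_of_pairwiseDisjoint hF⟩
  choose! T hvT hT using fun v (hv : 0 < g v) => hg.exists_isTight_mem hv (hmin v hv)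
  obtain ⟨F, hdisj, hFt, hcov⟩ := exists_pairwiseDisjoint_isTight_cover hskew hg
    ((univ.filter (0 < g ·)).image T) (by simpa using hT)
  -- uncrossing may have produced `∅`, which is tight and contributes nothing
  have hdisj' := hdisj.subset (filter_subset Finset.Nonempty F)
  refine ⟨F.filter Finset.Nonempty, fun A hA => (mem_filter.1 hA).2, hdisj', ?_⟩
  refine (sum_eq_sum_of_isTight_cover hdisj' (fun A hA => hFt A (mem_filter.1 hA).1)
    fun v hv => ?_).symm
  obtain ⟨A, hA, hvA⟩ := mem_biUnion.1 <| hcov v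
    (mem_biUnion.2 ⟨T v, mem_image_of_mem T (by simpa using hv), hvT v hv⟩) hv
  exact mem_biUnion.2 ⟨A, mem_filter.2 ⟨hA, v, hvA⟩, hvA⟩

/-- Benczúr–Frank: the total value of a minimal transversal of a nonnegative symmetric
skew-supermodular function equals the maximum of `∑_{A ∈ F} p(A)` over subpartitions `F`. -/
theorem minimal_transversal_value {S : Type*} [Fintype S] [DecidableEq S]
    (p : Finset S → ℤ) (hnn : ∀ A, 0 ≤ p A) (hempty : p ∅ = 0) (hfull : p Finset.univ = 0)
    (hsym : SymmetricFn p) (hskew : SkewSupermodular p)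
    (g : S → ℕ) (hg : IsTransversal p g)
    (hmin : ∀ v : S, 1 ≤ g v → ¬ IsTransversal p (Function.update g v (g v - 1))) :
    IsGreatest
      {x : ℤ | ∃ F : Finset (Finset S), (∀ A ∈ F, A.Nonempty) ∧
        ((F : Set (Finset S)).Pairwise fun A B => Disjoint A B) ∧ x = ∑ A ∈ F, p A}
      (∑ v : S, (g v : ℤ)) :=
  minimal_transversal_value_general p hskew g hg hmin
end
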